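/- If 0 ≤ α ≤ α* := (v_max − v_min)/(|v_min|(1+v_max)²), then X(v*,k) > 0 for all k ≥ 0. -/

import Mathlib

/-- Account value `X(v,k)` for feedback gain `α`, initial value `X0`, path `v`. -/
noncomputable def accountX (α X0 : ℝ) (v : ℕ → ℝ) : ℕ → ℝ
  | 0 => X0
  | 1 => X0
  | (k + 2) => accountX α X0 v (k + 1) + α * (1 + v k) * v (k + 1) * accountX α X0 v k

/-- The distinguished path: `v*(0) = v_max` and `v*(k) = v_min` for `k ≥ 1`. -/
noncomputable def vstar (vmin vmax : ℝ) : ℕ → ℝ := fun k => if k = 0 then vmax else vmin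

/-!
Along `v*` the account value satisfies, from `k = 1` on, the linear recurrence
`X(k+2) = X(k+1) - b X(k)` with `b = α (1+v_min) |v_min|`. With `q = (1+v_min)/(1+v_max)`, the
bound `α ≤ α*` says exactly that `α |v_min| (1+v_max) ≤ 1 - q`, hence `b ≤ q (1 - q)`.
For such a recurrence the ratio bound `X(k+1) ≥ q X(k)` propagates: if it holds at `k`, then
`X(k+2) ≥ X(k+1) - q (1 - q) X(k) ≥ X(k+1) - (1 - q) X(k+1) = q X(k+1)`. So the sequence
never decreases faster than geometrically with ratio `q > 0`, and stays positive.
-/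

theorem pos_and_ratio_le_of_recurrence {x : ℕ → ℝ} {b q : ℝ} (hq0 : 0 < q) (hq1 : q ≤ 1)
    (hb : b ≤ q * (1 - q)) (hrec : ∀ n, x (n + 2) = x (n + 1) - b * x n)
    (hx0 : 0 < x 0) (hx1 : q * x 0 ≤ x 1) :
    ∀ n, 0 < x n ∧ q * x n ≤ x (n + 1) := by
  intro n
  induction n with
  | zero => exact ⟨hx0, hx1⟩
  | succ n ih =>
    obtain ⟨hpos, hratio⟩ := ih
    have hb_mul : b * x n ≤ q * (1 - q) * x n := mul_le_mul_of_nonneg_right hb hpos.le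
    have hratio' : (1 - q) * (q * x n) ≤ (1 - q) * x (n + 1) :=
      mul_le_mul_of_nonneg_left hratio (by linarith)
    refine ⟨(mul_pos hq0 hpos).trans_le hratio, ?_⟩
    rw [hrec]
    linarith

theorem accountX_vstar_two (vmin vmax α X0 : ℝ) :
    accountX α X0 (vstar vmin vmax) 2 = X0 + α * (1 + vmax) * vmin * X0 := by
  simp [accountX, vstar]

theorem accountX_vstar_add_three (vmin vmax α X0 : ℝ) (n : ℕ) :
    accountX α X0 (vstar vmin vmax) (n + 3) =
      accountX α X0 (vstar vmin vmax) (n + 2) +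
        α * (1 + vmin) * vmin * accountX α X0 (vstar vmin vmax) (n + 1) := by
  simp [accountX, vstar]

theorem gain_mul_le_one_sub_ratio {vmin vmax α : ℝ} (hvmin : vmin < 0) (hvmax : -1 < vmax)
    (hα : α ≤ (vmax - vmin) / (|vmin| * (1 + vmax) ^ 2)) :
    α * -vmin * (1 + vmax) ≤ 1 - (1 + vmin) / (1 + vmax) := by
  have hR : 0 < 1 + vmax := by linarith
  rw [abs_of_neg hvmin, le_div_iff₀ (mul_pos (neg_pos.mpr hvmin) (pow_pos hR 2))] at hα
  rw [one_sub_div hR.ne', le_div_iff₀ hR]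
  linarith

theorem distinguished_path_positive_case_d_general (vmin vmax α X0 : ℝ)
    (h1 : -1 < vmin) (h2 : vmin < 0) (h3 : 0 < vmax) (hX0 : 0 < X0)
    (hα : α ≤ (vmax - vmin) / (|vmin| * (1 + vmax) ^ 2)) :
    ∀ k, 0 < accountX α X0 (vstar vmin vmax) k := by
  have hgain := gain_mul_le_one_sub_ratio h2 (by linarith) hα
  set q := (1 + vmin) / (1 + vmax)
  have hq0 : 0 < q := div_pos (by linarith) (by linarith)
  have hq1 : q ≤ 1 := (div_le_one (by linarith)).mpr (by linarith)
  have hb : α * (1 + vmin) * -vmin ≤ q * (1 - q) := by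
    have hr : 1 + vmin = q * (1 + vmax) := (div_mul_cancel₀ _ (by linarith)).symm
    rw [hr]
    linarith [mul_le_mul_of_nonneg_left hgain hq0.le]
  have hx1 : q * accountX α X0 (vstar vmin vmax) 1 ≤ accountX α X0 (vstar vmin vmax) 2 := by
    rw [accountX_vstar_two, accountX]
    nlinarith [mul_le_mul_of_nonneg_right hgain hX0.le]
  have hpos := pos_and_ratio_le_of_recurrence
    (x := fun n ↦ accountX α X0 (vstar vmin vmax) (n + 1)) hq0 hq1 hb
    (fun n ↦ by simp only [accountX_vstar_add_three]; ring) hX0 hx1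
  rintro (_ | k)
  · exact hX0
  · exact (hpos k).1

/-- Lemma 2(d): if `0 ≤ α ≤ α* = (v_max − v_min)/(|v_min|(1+v_max)²)`, then
`X(v*,k)` is positive for all `k ≥ 0`. -/
theorem distinguished_path_positive_case_d (vmin vmax α X0 : ℝ)
    (h1 : -1 < vmin) (h2 : vmin < 0) (h3 : 0 < vmax) (hX0 : 0 < X0)
    (hα0 : 0 ≤ α) (hα : α ≤ (vmax - vmin) / (|vmin| * (1 + vmax) ^ 2)) :
    ∀ k, 0 < accountX α X0 (vstar vmin vmax) k :=
  distinguished_path_positive_case_d_general vmin vmax α X0 h1 h2 h3 hX0 hα
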